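/- Intuitionistic propositional logic is sound with respect to monotonic introduction-based base-extension semantics: if Γ ⊢_IL A then Γ ⊩ A (A is a logical consequence of Γ over every atomic base). -/
import Mathlib


/-- Propositional atoms: `⊥` and countably many atoms `p n`. -/
inductive PAtom : Type
  | bot
  | p (n : ℕ)
deriving DecidableEq

/-- Formulas of the propositional language. -/
inductive Formula : Type
  | atom (a : PAtom)
  | and (A B : Formula)
  | or (A B : Formula)
  | imp (A B : Formula)
deriving DecidableEq

/-- Higher-level atomic rules: a rule has a list of premises, each of which may
discharge a list of lower-level rules, and has an atomic conclusion.
A level-0 rule (axiom) is `mk [] a`. -/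
inductive AtomicRule : Type
  | mk (prems : List (List AtomicRule × PAtom)) (concl : PAtom)

/-- The atomic explosion rules: from `⊥` infer any atom. -/
def AE : Set AtomicRule := { r | ∃ a, r = AtomicRule.mk [([], PAtom.bot)] a }

/-- An atomic base is a set of atomic rules containing atomic explosion. -/
def IsBase (B : Set AtomicRule) : Prop := AE ⊆ B

/-- Atomic derivability: `Der B Γ a` means the atom `a` is derivable from the assumed
atoms in `Γ` using the rules of `B` (rules discharged by an application of a
higher-level rule are temporarily added to the base). -/
inductive Der : Set AtomicRule → Set PAtom → PAtom → Prop
  | assum {B : Set AtomicRule} {Γ : Set PAtom} {a : PAtom} : a ∈ Γ → Der B Γ a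
  | app {B : Set AtomicRule} {Γ : Set PAtom} (prems : List (List AtomicRule × PAtom)) (a : PAtom) :
      AtomicRule.mk prems a ∈ B →
      (∀ pr ∈ prems, Der (B ∪ { r | r ∈ pr.1 }) Γ pr.2) →
      Der B Γ a

/-- The miB-eS forcing relation `⊩_B A` (consequence with empty antecedent):
atoms by atomic derivability, `∧` by both conjuncts, `∨` by one disjunct,
`→` by consequence over all extensions of the base. -/
def Force : Set AtomicRule → Formula → Prop
  | B, .atom a => Der B ∅ a
  | B, .and A C => Force B A ∧ Force B C
  | B, .or A C => Force B A ∨ Force B C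
  | B, .imp A C => ∀ X : Set AtomicRule, B ⊆ X → Force X A → Force X C

/-- The miB-eS consequence relation `Γ ⊩_B A`. -/
def Cons (B : Set AtomicRule) (Γ : Finset Formula) (A : Formula) : Prop :=
  if Γ = ∅ then Force B A
  else ∀ X : Set AtomicRule, B ⊆ X → (∀ G ∈ Γ, Force X G) → Force X A

/-- Intuitionistic propositional natural deduction. -/
inductive IL : Finset Formula → Formula → Prop
  | hyp {Γ : Finset Formula} {A : Formula} : A ∈ Γ → IL Γ A
  | andI {Γ : Finset Formula} {A B : Formula} : IL Γ A → IL Γ B → IL Γ (A.and B)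
  | andE1 {Γ : Finset Formula} {A B : Formula} : IL Γ (A.and B) → IL Γ A
  | andE2 {Γ : Finset Formula} {A B : Formula} : IL Γ (A.and B) → IL Γ B
  | orI1 {Γ : Finset Formula} {A B : Formula} : IL Γ A → IL Γ (A.or B)
  | orI2 {Γ : Finset Formula} {A B : Formula} : IL Γ B → IL Γ (A.or B)
  | orE {Γ : Finset Formula} {A B C : Formula} :
      IL Γ (A.or B) → IL (insert A Γ) C → IL (insert B Γ) C → IL Γ C
  | impI {Γ : Finset Formula} {A B : Formula} : IL (insert A Γ) B → IL Γ (A.imp B)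
  | impE {Γ : Finset Formula} {A B : Formula} : IL Γ (A.imp B) → IL Γ A → IL Γ B
  | botE {Γ : Finset Formula} {A : Formula} : IL Γ (Formula.atom PAtom.bot) → IL Γ A

theorem Der.mono {B B' : Set AtomicRule} {Γ : Set PAtom} {a : PAtom}
    (h : Der B Γ a) (hBB : B ⊆ B') : Der B' Γ a := by
  induction h generalizing B' with
  | assum ha => exact Der.assum ha
  | app prems a hmem _ ih =>
    exact Der.app prems a (hBB hmem) fun pr hpr =>
      ih pr hpr (Set.union_subset_union_left _ hBB)

theorem Force.mono {B X : Set AtomicRule} {A : Formula}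
    (h : Force B A) (hBX : B ⊆ X) : Force X A := by
  induction A generalizing B X with
  | atom a => exact Der.mono h hBX
  | and A C ihA ihC => exact ⟨ihA h.1 hBX, ihC h.2 hBX⟩
  | or A C ihA ihC => exact h.elim (fun hA => Or.inl (ihA hA hBX)) (fun hC => Or.inr (ihC hC hBX))
  | imp A C ihA ihC => exact fun Y hXY hA => h Y (hBX.trans hXY) hA

theorem Force.explode {X : Set AtomicRule} (hX : AE ⊆ X)
    (hbot : Der X ∅ PAtom.bot) (A : Formula) : Force X A := by
  induction A with
  | atom a =>
    refine Der.app [([], PAtom.bot)] a (hX ⟨a, rfl⟩) ?_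
    rintro pr hpr
    simp only [List.mem_singleton] at hpr
    subst hpr
    exact hbot.mono (Set.subset_union_left)
  | and A C ihA ihC => exact ⟨ihA, ihC⟩
  | or A C ihA _ => exact Or.inl ihA
  | imp A C _ ihC => exact fun Y hXY _ => ihC.mono hXY

theorem IL_sound_aux {Γ : Finset Formula} {A : Formula} (h : IL Γ A) :
    ∀ X : Set AtomicRule, AE ⊆ X → (∀ G ∈ Γ, Force X G) → Force X A := by
  induction h with
  | hyp hA => exact fun X _ hΓ => hΓ _ hA
  | andI _ _ ih1 ih2 => exact fun X hX hΓ => ⟨ih1 X hX hΓ, ih2 X hX hΓ⟩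
  | andE1 _ ih => exact fun X hX hΓ => (ih X hX hΓ).1
  | andE2 _ ih => exact fun X hX hΓ => (ih X hX hΓ).2
  | orI1 _ ih => exact fun X hX hΓ => Or.inl (ih X hX hΓ)
  | orI2 _ ih => exact fun X hX hΓ => Or.inr (ih X hX hΓ)
  | orE _ _ _ ih1 ih2 ih3 =>
    intro X hX hΓ
    rcases ih1 X hX hΓ with hA | hB
    · exact ih2 X hX (fun G hG => by
        rcases Finset.mem_insert.mp hG with rfl | hG
        · exact hA
        · exact hΓ G hG)
    · exact ih3 X hX (fun G hG => by
        rcases Finset.mem_insert.mp hG with rfl | hG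
        · exact hB
        · exact hΓ G hG)
  | impI _ ih =>
    intro X hX hΓ Y hXY hA
    exact ih Y (hX.trans hXY) (fun G hG => by
      rcases Finset.mem_insert.mp hG with rfl | hG
      · exact hA
      · exact (hΓ G hG).mono hXY)
  | impE _ _ ih1 ih2 =>
    exact fun X hX hΓ => ih1 X hX hΓ X (le_refl _) (ih2 X hX hΓ)
  | botE _ ih =>
    exact fun X hX hΓ => Force.explode hX (ih X hX hΓ) _

/-- soundness of intuitionistic propositional logic with respect to
miB-eS: if `Γ ⊢_IL A` then `Γ ⊩ A`, i.e. `Γ ⊩_B A` over every atomic base `B`. -/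
theorem IL_sound_miBeS (Γ : Finset Formula) (A : Formula) (h : IL Γ A) :
    ∀ B : Set AtomicRule, IsBase B → Cons B Γ A := by
  intro B hB
  unfold Cons
  split
  · next hΓ =>
    subst hΓ
    exact IL_sound_aux h B hB (by simp)
  · exact fun X hBX hΓ => IL_sound_aux h X (hB.trans hBX) hΓ
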